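/- arXiv:2404.12566 — 4 statements merged into one kernel-verified Lean document; each statement's English description precedes it below -/
import Mathlib

section
/- Let γ > 0 and let s : ℝ → (0,1] be a differentiable function with s(t) = exp(−R₀·∫₀^∞ (1 − s(t−u))·γ·e^{−γu} du) for all t, where R₀ > 0, and where s is bounded and s(−∞) = 1. Define i(t) = 1 − s(t) − ∫_{−∞}^t (1−s(v))·γ·e^{−γ(t−v)} dv and r(t) = ∫_{−∞}^t (1−s(v))·γ·e^{−γ(t−v)} dv. Then s, i, r satisfy the Kermack–McKendrick equations: s'(t) = −γR₀·i(t)·s(t), i'(t) = γR₀·i(t)·s(t) − γ·i(t), and r'(t) = γ·i(t). -/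
open Real Filter Topology MeasureTheory Set

/-!
Write `r = (1 - s) ⋆ γe^{-γ·}` for the convolution over the past. Pulling `e^{-γt}` out of the
integral, `r(t) = γ e^{-γt} ∫_{-∞}^t (1 - s v) e^{γv} dv`, so by the product rule and the
fundamental theorem of calculus `r' = γ(1 - s - r) = γ i`. After the substitution `v = t - u`
the renewal equation reads `s = exp(-R₀ r)`, whence `s' = -R₀ r' s`, and `i = 1 - s - r`
gives `i' = -s' - r'`.
-/

theorem integral_Ioi_comp_sub_eq_integral_Iic {E : Type*} [NormedAddCommGroup E]
    [NormedSpace ℝ E] (f : ℝ → E) (t : ℝ) :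
    ∫ u in Ioi 0, f (t - u) = ∫ v in Iic t, f v := by
  rw [← integral_Ici_eq_integral_Ioi,
    ← (volume.measurePreserving_sub_left t).setIntegral_preimage_emb
      (measurableEmbedding_subLeft t) f (Iic t)]
  congr 2
  ext u
  simp

theorem hasDerivAt_integral_Iic {E : Type*} [NormedAddCommGroup E] [NormedSpace ℝ E]
    [CompleteSpace E] {f : ℝ → E} {a : ℝ}
    (hf : ∀ x, IntegrableOn f (Iic x)) (hfa : ContinuousAt f a) :
    HasDerivAt (fun x => ∫ v in Iic x, f v) (f a) a := by
  have hsplit (x : ℝ) : ∫ v in Iic x, f v = (∫ v in Iic a, f v) + ∫ v in a..x, f v := by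
    rw [← intervalIntegral.integral_Iic_sub_Iic (hf a) (hf x), add_sub_cancel]
  have hmeas : StronglyMeasurableAtFilter f (𝓝 a) :=
    AEStronglyMeasurable.stronglyMeasurableAtFilter_of_mem (hf (a + 1)).aestronglyMeasurable
      (Iic_mem_nhds (lt_add_one a))
  exact ((intervalIntegral.integral_hasDerivAt_right IntervalIntegrable.refl hmeas hfa).const_add
    _).congr_of_eventuallyEq (.of_forall hsplit)

theorem integrableOn_Iic_mul_exp_mul {γ C : ℝ} (hγ : 0 < γ) {g : ℝ → ℝ}
    (hg : AEStronglyMeasurable g) (hbdd : ∀ v, |g v| ≤ C) (a : ℝ) :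
    IntegrableOn (fun v => g v * exp (γ * v)) (Iic a) :=
  (integrableOn_exp_mul_Iic hγ a).bdd_mul hg.restrict (c := C) (.of_forall hbdd)

theorem hasDerivAt_integral_Iic_mul_exp_kernel {γ C : ℝ} (hγ : 0 < γ) {g : ℝ → ℝ}
    (hg : Continuous g) (hbdd : ∀ v, |g v| ≤ C) (t : ℝ) :
    HasDerivAt (fun x => ∫ v in Iic x, g v * (γ * exp (-γ * (x - v))))
      (γ * (g t - ∫ v in Iic t, g v * (γ * exp (-γ * (t - v))))) t := by
  have hfactor : ∀ x, ∫ v in Iic x, g v * (γ * exp (-γ * (x - v)))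
      = γ * exp (-γ * x) * ∫ v in Iic x, g v * exp (γ * v) := fun x => by
    rw [← integral_const_mul]
    congr 1 with v
    rw [show -γ * (x - v) = -γ * x + γ * v by ring, exp_add]
    ring
  have hexp : HasDerivAt (fun x => γ * exp (-γ * x)) (γ * (exp (-γ * t) * -γ)) t := by
    simpa using ((hasDerivAt_id t).const_mul (-γ)).exp.const_mul γ
  have hint := hasDerivAt_integral_Iic
    (integrableOn_Iic_mul_exp_mul hγ hg.aestronglyMeasurable hbdd)
    (hg.mul (continuous_exp.comp (continuous_const_mul γ))).continuousAt (a := t)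
  refine ((hexp.mul hint).congr_of_eventuallyEq (.of_forall hfactor)).congr_deriv ?_
  rw [hfactor t]
  have : exp (-γ * t) * exp (γ * t) = 1 := by rw [← exp_add]; simp
  linear_combination γ * g t * this

theorem stmt7_general (γ R₀ : ℝ) (hγ : 0 < γ)
    (s i r : ℝ → ℝ)
    (hs : Differentiable ℝ s)
    (hrange : ∀ t, 0 < s t ∧ s t ≤ 1)
    (heq : ∀ t, s t = Real.exp (-R₀ * ∫ u in Set.Ioi (0:ℝ),
        (1 - s (t - u)) * (γ * Real.exp (-γ * u))))
    (hi : ∀ t, i t = 1 - s t - ∫ v in Set.Iic t, (1 - s v) * (γ * Real.exp (-γ * (t - v))))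
    (hr : ∀ t, r t = ∫ v in Set.Iic t, (1 - s v) * (γ * Real.exp (-γ * (t - v)))) :
    ∀ t, HasDerivAt s (-(γ * R₀) * i t * s t) t ∧
      HasDerivAt i (γ * R₀ * i t * s t - γ * i t) t ∧
      HasDerivAt r (γ * i t) t := by
  have hi_eq : ∀ t, i t = 1 - s t - r t := fun t => by rw [hi t, hr t]
  have hs_eq : ∀ t, s t = exp (-R₀ * r t) := fun t => by
    rw [heq t, hr t, ← integral_Ioi_comp_sub_eq_integral_Iic]
    simp only [sub_sub_cancel]
  have hbdd : ∀ v, |1 - s v| ≤ 1 := fun v =>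
    abs_le.2 ⟨by linarith [(hrange v).2], by linarith [(hrange v).1]⟩
  have hr_deriv : ∀ t, HasDerivAt r (γ * i t) t := fun t => by
    rw [hi_eq t, hr t]
    exact (hasDerivAt_integral_Iic_mul_exp_kernel hγ (continuous_const.sub hs.continuous) hbdd
      t).congr_of_eventuallyEq (.of_forall hr)
  have hs_deriv : ∀ t, HasDerivAt s (-(γ * R₀) * i t * s t) t := fun t => by
    refine (((hr_deriv t).const_mul (-R₀)).exp.congr_of_eventuallyEq
      (.of_forall hs_eq)).congr_deriv ?_
    rw [← hs_eq t]
    ring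
  refine fun t => ⟨hs_deriv t, ?_, hr_deriv t⟩
  refine ((((hasDerivAt_const t 1).sub (hs_deriv t)).sub (hr_deriv t)).congr_of_eventuallyEq
    (.of_forall hi_eq)).congr_deriv ?_
  ring

/-- The limiting susceptible, infected and recovered curves of the single-type
Markovian SIR epidemic satisfy the Kermack–McKendrick ODEs. -/
theorem stmt7 (γ R₀ : ℝ) (hγ : 0 < γ) (hR : 0 < R₀)
    (s i r : ℝ → ℝ)
    (hs : Differentiable ℝ s)
    (hrange : ∀ t, 0 < s t ∧ s t ≤ 1)
    (heq : ∀ t, s t = Real.exp (-R₀ * ∫ u in Set.Ioi (0:ℝ),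
        (1 - s (t - u)) * (γ * Real.exp (-γ * u))))
    (hlim : Tendsto s atBot (𝓝 1))
    (hi : ∀ t, i t = 1 - s t - ∫ v in Set.Iic t, (1 - s v) * (γ * Real.exp (-γ * (t - v))))
    (hr : ∀ t, r t = ∫ v in Set.Iic t, (1 - s v) * (γ * Real.exp (-γ * (t - v)))) :
    ∀ t, HasDerivAt s (-(γ * R₀) * i t * s t) t ∧
      HasDerivAt i (γ * R₀ * i t * s t - γ * i t) t ∧
      HasDerivAt r (γ * i t) t :=
  stmt7_general γ R₀ hγ s i r hs hrange heq hi hr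
end

section
/- Let λ, μ, β, γ > 0 and suppose functions s, i, r, l_c, l_d : ℝ → ℝ satisfy s' = −β(l_c + l_d)·s, i' = β(l_c+l_d)·s − γ·i, r' = γ·i, l_c' = (λβ/μ)(l_c+l_d)·s − (μ+β+γ)·l_c, and l_d' = μ·l_c − γ·l_d. Then l := l_c + l_d satisfies l' = (βλ/μ)·l·s + λ·i − (β+μ+γ)·l, provided the constraint (λ/μ)·i = l_c + l_d + (β/μ)·l_d holds. -/
theorem stmt12_general (lam μ β γ : ℝ) (hμ : 0 < μ)
    (s i lc ld : ℝ → ℝ)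
    (hlc : ∀ t, HasDerivAt lc ((lam * β / μ) * (lc t + ld t) * s t - (μ + β + γ) * lc t) t)
    (hld : ∀ t, HasDerivAt ld (μ * lc t - γ * ld t) t)
    (hconstraint : ∀ t, (lam / μ) * i t = lc t + ld t + (β / μ) * ld t) :
    ∀ t, HasDerivAt (fun t => lc t + ld t)
      ((β * lam / μ) * (lc t + ld t) * s t + lam * i t - (β + μ + γ) * (lc t + ld t)) t := by
  intro t
  have hlam_i : lam * i t = μ * (lc t + ld t) + β * ld t := by
    have := hconstraint t
    field_simp at this
    linarith
  refine ((hlc t).add (hld t)).congr_deriv ?_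
  rw [hlam_i]
  ring

/-- The two-component active-edge ODE system collapses, under the constraint
`(λ/μ) i = l_c + l_d + (β/μ) l_d`, to the single novel ODE
`l' = (βλ/μ) l s + λ i − (β+μ+γ) l` for `l = l_c + l_d`. -/
theorem stmt12 (lam μ β γ : ℝ) (hlam : 0 < lam) (hμ : 0 < μ) (hβ : 0 < β) (hγ : 0 < γ)
    (s i r lc ld : ℝ → ℝ)
    (hs : ∀ t, HasDerivAt s (-β * (lc t + ld t) * s t) t)
    (hi : ∀ t, HasDerivAt i (β * (lc t + ld t) * s t - γ * i t) t)
    (hr : ∀ t, HasDerivAt r (γ * i t) t)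
    (hlc : ∀ t, HasDerivAt lc ((lam * β / μ) * (lc t + ld t) * s t - (μ + β + γ) * lc t) t)
    (hld : ∀ t, HasDerivAt ld (μ * lc t - γ * ld t) t)
    (hconstraint : ∀ t, (lam / μ) * i t = lc t + ld t + (β / μ) * ld t) :
    ∀ t, HasDerivAt (fun t => lc t + ld t)
      ((β * lam / μ) * (lc t + ld t) * s t + lam * i t - (β + μ + γ) * (lc t + ld t)) t :=
  stmt12_general lam μ β γ hμ s i lc ld hlc hld hconstraint
end

section
/- Let β, λ, μ, γ > 0 with λβ/(μ+β) > γ·s₀ for some s₀ ∈ (0,1]. Suppose s, i, l_c, l_d : ℝ → ℝ≥0 satisfy i' = β(l_c+l_d)s − γi together with l_d = (λ/(μ+β))·i − (μ/(μ+β))·l_c and 0 ≤ l_c ≤ (λ/μ)·i. Then for all t: (λβ/(μ+β))·i(t)·s(t) − γ·i(t) ≤ i'(t) ≤ (λβ/μ)·i(t)·s(t) − γ·i(t). -/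
/-- Bounds on the derivative of the infected fraction in the dynamic
Erdős–Rényi SIR model, obtained from the linear relation for `l_d` and the
a priori bounds `0 ≤ l_c ≤ (λ/μ)·i`. -/
theorem stmt16 (β lam μ γ : ℝ) (hβ : 0 < β) (hlam : 0 < lam) (hμ : 0 < μ) (hγ : 0 < γ)
    (s₀ : ℝ) (hs₀ : 0 < s₀ ∧ s₀ ≤ 1) (hthresh : lam * β / (μ + β) > γ * s₀)
    (s i lc ld : ℝ → ℝ)
    (hs_nonneg : ∀ t, 0 ≤ s t) (hi_nonneg : ∀ t, 0 ≤ i t)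
    (hlc_nonneg : ∀ t, 0 ≤ lc t) (hld_nonneg : ∀ t, 0 ≤ ld t)
    (hi' : ∀ t, HasDerivAt i (β * (lc t + ld t) * s t - γ * i t) t)
    (hld : ∀ t, ld t = (lam / (μ + β)) * i t - (μ / (μ + β)) * lc t)
    (hlc_ub : ∀ t, lc t ≤ (lam / μ) * i t) :
    ∀ t, (lam * β / (μ + β)) * i t * s t - γ * i t ≤ deriv i t ∧
      deriv i t ≤ (lam * β / μ) * i t * s t - γ * i t := by
  intro t
  rw [(hi' t).deriv, hld t]
  have hμβ : 0 < μ + β := by linarith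
  have hs := hs_nonneg t
  have hi := hi_nonneg t
  have hlc := hlc_nonneg t
  have hub := hlc_ub t
  have e1 : β * (lc t + ((lam / (μ + β)) * i t - (μ / (μ + β)) * lc t)) * s t
      = (lam * β / (μ + β)) * i t * s t + (β * β / (μ + β)) * lc t * s t := by
    field_simp; ring
  constructor
  · rw [e1]
    have : 0 ≤ (β * β / (μ + β)) * lc t * s t := by positivity
    linarith
  · rw [e1]
    have h2 : (β * β / (μ + β)) * lc t * s t ≤ (β * β / (μ + β)) * ((lam / μ) * i t) * s t := by
      apply mul_le_mul_of_nonneg_right _ hs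
      apply mul_le_mul_of_nonneg_left hub (by positivity)
    have e2 : (lam * β / (μ + β)) * i t * s t + (β * β / (μ + β)) * ((lam / μ) * i t) * s t
        = (lam * β / μ) * i t * s t := by field_simp
    linarith
end

section
/- Let n, m₁, m₂ be positive integers with m₁ + m₂ ≤ n. Let H denote the probability that two independent uniformly random subsets of {1,…,n} of sizes m₁ and m₂ intersect in exactly j elements (hypergeometric), and let e = m₁m₂/n. Then the total variation distance between the hypergeometric distribution of the intersection size and the Poisson distribution with mean e is at most (1 − e^{−e})·(n/(n−1))·(m₁/n + m₂/n − m₁m₂/n² − 1/n), which is in turn at most (m₁ + m₂)/n. -/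
/-!
Stein–Chen method with a size-biased coupling. Let `P = hypergeomPMF n m₁ m₂` be the law of the
intersection size and `Q = hypergeomPMF (n - 1) (m₁ - 1) (m₂ - 1)`; then
`(j + 1) P (j + 1) = e Q j`, i.e. `Q` is the size-biased law shifted down by one. For a set `A`,
the solution `g` of the Poisson Stein equation `e g(j) - j g(j - 1) = 1_A(j) - Po(e)(A)` turns
`P(A) - Po(e)(A)` into `e ∑ g (P - Q)`. The two laws cross only once (monotone likelihood
ratio), so `Q` is stochastically smaller than `P`, and summation by parts together with the
Barbour–Eagleson bound `g(j + 1) - g(j) ≤ (1 - e^{-e}) / e` gives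
`P(A) - Po(e)(A) ≤ (1 - e^{-e}) (E P - E Q)`, where
`E P - E Q = m₁m₂/n - (m₁ - 1)(m₂ - 1)/(n - 1)` is the stated factor.
-/

open Real Finset

noncomputable section

theorem tsum_abs_eq_two_mul_tsum_max {ι : Type*} {x : ι → ℝ} (hx : Summable x)
    (h0 : ∑' i, x i = 0) : ∑' i, |x i| = 2 * ∑' i, max (x i) 0 := by
  have habs : ∀ i, |x i| = 2 * max (x i) 0 - x i := fun i => by
    rcases le_total 0 (x i) with h | h
    · rw [max_eq_left h, abs_of_nonneg h]; ring
    · rw [max_eq_right h, abs_of_nonpos h]; ring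
  have hmax : Summable fun i => 2 * max (x i) 0 :=
    ((summable_abs_iff.2 hx).add hx).congr fun i => by rw [habs]; ring
  rw [tsum_congr habs, hmax.tsum_sub hx, tsum_mul_left, h0, sub_zero]

theorem sum_range_le_of_crossing {p q : ℕ → ℝ} {N : ℕ}
    (htot : ∑ j ∈ range N, p j = ∑ j ∈ range N, q j)
    (hcross : ∀ j, q j ≤ p j → q (j + 1) ≤ p (j + 1)) {t : ℕ} (ht : t ≤ N) :
    ∑ j ∈ range t, p j ≤ ∑ j ∈ range t, q j := by
  have hmono : ∀ k l, k ≤ l → q k ≤ p k → q l ≤ p l := fun k l hkl hk =>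
    Nat.le_induction hk (fun j _ => hcross j) l hkl
  by_cases hqt : q t ≤ p t
  · have htail : ∑ j ∈ Ico t N, q j ≤ ∑ j ∈ Ico t N, p j :=
      sum_le_sum fun j hj => hmono t j (mem_Ico.1 hj).1 hqt
    rw [← sum_range_add_sum_Ico _ ht, ← sum_range_add_sum_Ico _ ht] at htot
    linarith
  · exact sum_le_sum fun j hj =>
      le_of_lt (not_le.1 fun h => hqt (hmono j t (mem_range.1 hj).le h))

theorem sum_mul_sub_le_of_sum_range_le {p q g : ℕ → ℝ} {N : ℕ} {B : ℝ}
    (htot : ∑ j ∈ range N, p j = ∑ j ∈ range N, q j)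
    (hcdf : ∀ t ≤ N, ∑ j ∈ range t, p j ≤ ∑ j ∈ range t, q j)
    (hg : ∀ i, g (i + 1) - g i ≤ B) :
    ∑ i ∈ range N, g i * (p i - q i) ≤ B * ∑ i ∈ range N, (i : ℝ) * (p i - q i) := by
  have hD : ∀ t ≤ N, ∑ j ∈ range t, (p j - q j) ≤ 0 := fun t ht => by
    rw [sum_sub_distrib]; linarith [hcdf t ht]
  have hDN : ∑ j ∈ range N, (p j - q j) = 0 := by rw [sum_sub_distrib, htot, sub_self]
  have hparts := sum_range_by_parts g (fun i => p i - q i) N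
  have hid := sum_range_by_parts (fun i => (i : ℝ)) (fun i => p i - q i) N
  simp only [smul_eq_mul, hDN, mul_zero, zero_sub] at hparts hid
  rw [hparts, hid, mul_neg, neg_le_neg_iff, mul_sum]
  refine sum_le_sum fun i hi => ?_
  rw [Nat.cast_succ, add_sub_cancel_left, one_mul]
  exact mul_le_mul_of_nonpos_right (hg i) (hD (i + 1) (by have := mem_range.1 hi; omega))

def poissonProb (r : ℝ) (j : ℕ) : ℝ := exp (-r) * r ^ j / j.factorial

theorem hasSum_poissonProb (r : ℝ) : HasSum (poissonProb r) 1 := by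
  have h := (NormedSpace.expSeries_div_hasSum_exp r).mul_left (exp (-r))
  rw [← exp_eq_exp_ℝ, ← exp_add, neg_add_cancel, exp_zero] at h
  show HasSum (fun j : ℕ => exp (-r) * r ^ j / j.factorial) 1
  simpa only [mul_div_assoc] using h

def expPartialSum (r : ℝ) (k : ℕ) : ℝ := ∑ i ∈ range (k + 1), r ^ i / i.factorial

theorem hasSum_exp_sub_expPartialSum (r : ℝ) (k : ℕ) :
    HasSum (fun i => r ^ (i + (k + 1)) / (i + (k + 1)).factorial) (exp r - expPartialSum r k) :=
  (hasSum_nat_add_iff' (k + 1)).2 (by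
    simpa only [exp_eq_exp_ℝ] using NormedSpace.expSeries_div_hasSum_exp r)

theorem pow_succ_div_factorial_succ_mul (r : ℝ) (i : ℕ) :
    r ^ (i + 1) / (i + 1).factorial * (i + 1) = r * (r ^ i / i.factorial) := by
  rw [Nat.factorial_succ]
  push_cast
  field_simp
  ring

theorem mul_expPartialSum_le {r : ℝ} (hr : 0 ≤ r) (u : ℕ) :
    r * expPartialSum r u ≤ (u + 1) * (expPartialSum r (u + 1) - 1) := by
  have hshift :
      expPartialSum r (u + 1) - 1 = ∑ i ∈ range (u + 1), r ^ (i + 1) / (i + 1).factorial := by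
    rw [expPartialSum, sum_range_succ']
    simp
  rw [hshift, expPartialSum, mul_sum, mul_sum]
  refine sum_le_sum fun i hi => ?_
  rw [← pow_succ_div_factorial_succ_mul, mul_comm]
  have : (i : ℝ) + 1 ≤ u + 1 := by exact_mod_cast Nat.succ_le_succ (mem_range_succ_iff.1 hi)
  gcongr

theorem succ_mul_exp_sub_expPartialSum_le {r : ℝ} (hr : 0 ≤ r) (u : ℕ) :
    (u + 1) * (exp r - expPartialSum r (u + 1)) ≤ r * (exp r - expPartialSum r u) := by
  refine hasSum_le (fun i => ?_) ((hasSum_exp_sub_expPartialSum r (u + 1)).mul_left _)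
    ((hasSum_exp_sub_expPartialSum r u).mul_left r)
  rw [← pow_succ_div_factorial_succ_mul, mul_comm, show i + (u + 1) + 1 = i + (u + 1 + 1) by ring]
  gcongr
  linarith [(i.cast_nonneg : (0 : ℝ) ≤ i)]

theorem factorial_div_pow_succ {r : ℝ} (hr : r ≠ 0) (u : ℕ) :
    ((u + 1).factorial : ℝ) / r ^ (u + 1 + 1) = (u + 1) / r * (u.factorial / r ^ (u + 1)) := by
  rw [Nat.factorial_succ, pow_succ _ (u + 1)]
  push_cast
  field_simp

theorem factorial_div_pow_mul_expPartialSum_le_succ {r : ℝ} (hr : 0 < r) (u : ℕ) :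
    u.factorial / r ^ (u + 1) * expPartialSum r u
      ≤ (u + 1).factorial / r ^ (u + 1 + 1) * expPartialSum r (u + 1) := by
  have hs : r * expPartialSum r u ≤ (u + 1) * expPartialSum r (u + 1) := by
    linarith [mul_expPartialSum_le hr.le u, (u.cast_nonneg : (0 : ℝ) ≤ u)]
  rw [factorial_div_pow_succ hr.ne', mul_comm ((u + 1 : ℝ) / r), mul_assoc]
  gcongr
  rw [div_mul_eq_mul_div, le_div_iff₀ hr]
  linarith

theorem factorial_div_pow_mul_exp_sub_expPartialSum_succ_le {r : ℝ} (hr : 0 < r) (u : ℕ) :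
    (u + 1).factorial / r ^ (u + 1 + 1) * (exp r - expPartialSum r (u + 1))
      ≤ u.factorial / r ^ (u + 1) * (exp r - expPartialSum r u) := by
  rw [factorial_div_pow_succ hr.ne', mul_comm ((u + 1 : ℝ) / r), mul_assoc]
  gcongr
  rw [div_mul_eq_mul_div, div_le_iff₀ hr, mul_comm _ r]
  exact succ_mul_exp_sub_expPartialSum_le hr.le u

/-- At `j = 0` the truncated `j - 1` is harmless: the factor `j` vanishes. -/
def poissonSteinOp (r : ℝ) (g : ℕ → ℝ) (j : ℕ) : ℝ := r * g j - j * g (j - 1)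

theorem sum_mul_poissonSteinOp_of_sizeBias {P Q : ℕ → ℝ} {r : ℝ}
    (hbias : ∀ k : ℕ, ((k : ℝ) + 1) * P (k + 1) = r * Q k) (g : ℕ → ℝ) (N : ℕ) :
    ∑ j ∈ range (N + 1), P j * poissonSteinOp r g j
      = r * (∑ j ∈ range (N + 1), P j * g j - ∑ j ∈ range N, Q j * g j) := by
  simp only [poissonSteinOp, mul_sub, sum_sub_distrib, mul_sum]
  congr 1
  · exact sum_congr rfl fun j _ => by ring
  · rw [sum_range_succ']
    simp only [Nat.cast_zero, zero_mul, mul_zero, add_zero, Nat.add_sub_cancel]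
    refine sum_congr rfl fun j _ => ?_
    push_cast
    rw [← mul_assoc r, ← hbias j]
    ring

def poissonSteinSol (r : ℝ) (h : ℕ → ℝ) (k : ℕ) : ℝ :=
  k.factorial / r ^ (k + 1) * ∑ i ∈ range (k + 1), r ^ i / i.factorial * h i

theorem poissonSteinOp_poissonSteinSol {r : ℝ} (hr : r ≠ 0) (h : ℕ → ℝ) (k : ℕ) :
    poissonSteinOp r (poissonSteinSol r h) k = h k := by
  cases k with
  | zero =>
    simp only [poissonSteinOp, poissonSteinSol, Nat.factorial_zero, Nat.cast_one, zero_add, pow_one,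
      range_one, sum_singleton, pow_zero, div_one, one_mul, CharP.cast_eq_zero, zero_mul, sub_zero]
    field_simp
  | succ k =>
    simp only [poissonSteinOp, poissonSteinSol, sum_range_succ _ (k + 1), Nat.add_sub_cancel,
      Nat.factorial_succ]
    push_cast
    field_simp
    ring

theorem poissonSteinSol_sum (r : ℝ) (s : Finset ℕ) (f : ℕ → ℕ → ℝ) (k : ℕ) :
    poissonSteinSol r (fun i => ∑ j ∈ s, f j i) k = ∑ j ∈ s, poissonSteinSol r (f j) k := by
  simp only [poissonSteinSol, mul_sum]
  exact sum_comm

theorem poissonSteinSol_single (r : ℝ) (j k : ℕ) :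
    poissonSteinSol r (fun i => (if i = j then 1 else 0) - poissonProb r j) k
      = poissonProb r j * (k.factorial / r ^ (k + 1))
          * (if j ≤ k then exp r - expPartialSum r k else -expPartialSum r k) := by
  simp only [poissonSteinSol, mul_sub, mul_ite, mul_one, mul_zero, sum_sub_distrib,
    sum_ite_eq', mem_range, Nat.lt_succ_iff, ← sum_mul]
  rw [← expPartialSum]
  have hw : r ^ j / j.factorial = poissonProb r j * exp r := by
    rw [poissonProb, exp_neg]
    field_simp
  split_ifs
  · rw [hw]; ring
  · ring

theorem poissonSteinSol_single_succ_sub_le {r : ℝ} (hr : 0 < r) (j u : ℕ) :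
    poissonSteinSol r (fun i => (if i = j then 1 else 0) - poissonProb r j) (u + 1)
        - poissonSteinSol r (fun i => (if i = j then 1 else 0) - poissonProb r j) u
      ≤ if j = u + 1 then (1 - exp (-r)) / r else 0 := by
  have hπ : 0 ≤ poissonProb r j := by unfold poissonProb; positivity
  simp only [poissonSteinSol_single]
  rcases lt_trichotomy j (u + 1) with hj | rfl | hj
  · rw [if_pos (by omega), if_pos (by omega), if_neg hj.ne]
    have := factorial_div_pow_mul_exp_sub_expPartialSum_succ_le hr u
    nlinarith
  · rw [if_pos le_rfl, if_neg (by omega), if_pos rfl]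
    have hρ₁ : poissonProb r (u + 1) * ((u + 1).factorial / r ^ (u + 1 + 1)) = exp (-r) / r := by
      rw [poissonProb]
      field_simp
      ring
    have hρ₀ : poissonProb r (u + 1) * (u.factorial / r ^ (u + 1)) = exp (-r) / (u + 1) := by
      rw [poissonProb, Nat.factorial_succ]
      push_cast
      field_simp
    have hs : expPartialSum r u / (u + 1) ≤ (expPartialSum r (u + 1) - 1) / r := by
      rw [div_le_div_iff₀ (by positivity) hr, mul_comm, mul_comm _ ((u : ℝ) + 1)]
      exact mul_expPartialSum_le hr.le u
    calc _ = exp (-r) * ((exp r - expPartialSum r (u + 1)) / r + expPartialSum r u / (u + 1)) := by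
          rw [mul_neg, sub_neg_eq_add, hρ₁, hρ₀]; ring
      _ ≤ exp (-r) * ((exp r - expPartialSum r (u + 1)) / r
            + (expPartialSum r (u + 1) - 1) / r) := by
          gcongr
      _ = (1 - exp (-r)) / r := by
          rw [exp_neg]
          field_simp
          ring
  · rw [if_neg (by omega), if_neg (by omega), if_neg hj.ne']
    have := factorial_div_pow_mul_expPartialSum_le_succ hr u
    nlinarith

theorem poissonSteinSol_indicator_succ_sub_le {r : ℝ} (hr : 0 < r) (A : Finset ℕ) (u : ℕ) :
    poissonSteinSol r (fun i => (if i ∈ A then 1 else 0) - ∑ j ∈ A, poissonProb r j) (u + 1)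
        - poissonSteinSol r (fun i => (if i ∈ A then 1 else 0) - ∑ j ∈ A, poissonProb r j) u
      ≤ (1 - exp (-r)) / r := by
  have hdecomp : (fun i => (if i ∈ A then (1 : ℝ) else 0) - ∑ j ∈ A, poissonProb r j)
      = fun i => ∑ j ∈ A, ((if i = j then 1 else 0) - poissonProb r j) := by
    ext i
    rw [sum_sub_distrib, sum_ite_eq]
  have hB : 0 ≤ (1 - exp (-r)) / r :=
    div_nonneg (sub_nonneg.2 (exp_le_one_iff.2 (neg_nonpos.2 hr.le))) hr.le
  rw [hdecomp, poissonSteinSol_sum, poissonSteinSol_sum, ← sum_sub_distrib]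
  calc _ ≤ ∑ j ∈ A, if j = u + 1 then (1 - exp (-r)) / r else 0 :=
        sum_le_sum fun j _ => poissonSteinSol_single_succ_sub_le hr j u
    _ ≤ (1 - exp (-r)) / r := by
        rw [sum_ite_eq']
        split_ifs
        exacts [le_rfl, hB]

def hypergeomPMF (n a b j : ℕ) : ℝ :=
  if j ≤ b then ((a.choose j * (n - a).choose (b - j) : ℕ) : ℝ) / ((n.choose b : ℕ) : ℝ) else 0

theorem hypergeomPMF_nonneg (n a b j : ℕ) : 0 ≤ hypergeomPMF n a b j := by
  unfold hypergeomPMF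
  positivity

theorem hypergeomPMF_of_lt {n a b j : ℕ} (h : b < j) : hypergeomPMF n a b j = 0 :=
  if_neg (not_le.2 h)

theorem hypergeomPMF_of_lt_left {n a b j : ℕ} (h : a < j) : hypergeomPMF n a b j = 0 := by
  simp [hypergeomPMF, Nat.choose_eq_zero_of_lt h]

theorem sum_hypergeomPMF {n a b : ℕ} (ha : a ≤ n) (hb : b ≤ n) :
    ∑ j ∈ range (b + 1), hypergeomPMF n a b j = 1 := by
  have hvdm : ∑ j ∈ range (b + 1), a.choose j * (n - a).choose (b - j) = n.choose b := by
    rw [← Nat.add_sub_cancel' ha, Nat.add_sub_cancel_left, Nat.add_choose_eq,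
      Nat.sum_antidiagonal_eq_sum_range_succ_mk]
  have hC : ((n.choose b : ℕ) : ℝ) ≠ 0 := by exact_mod_cast (Nat.choose_pos hb).ne'
  calc ∑ j ∈ range (b + 1), hypergeomPMF n a b j
      = ((∑ j ∈ range (b + 1), a.choose j * (n - a).choose (b - j) : ℕ) : ℝ)
          / (n.choose b : ℕ) := by
        rw [Nat.cast_sum, sum_div]
        exact sum_congr rfl fun j hj => if_pos (mem_range_succ_iff.1 hj)
    _ = 1 := by rw [hvdm, div_self hC]

theorem succ_mul_hypergeomPMF_succ {n a b : ℕ} (ha : 0 < a) (hb : 0 < b) (hbn : b ≤ n) (j : ℕ) :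
    ((j : ℝ) + 1) * hypergeomPMF n a b (j + 1)
      = a * b / n * hypergeomPMF (n - 1) (a - 1) (b - 1) j := by
  obtain ⟨a, rfl⟩ := Nat.exists_eq_add_of_lt ha
  obtain ⟨b, rfl⟩ := Nat.exists_eq_add_of_lt hb
  obtain ⟨n, rfl⟩ : ∃ n', n = n' + 1 := ⟨n - 1, by omega⟩
  simp only [zero_add, Nat.add_sub_cancel]
  by_cases hj : j ≤ b
  · rw [hypergeomPMF, hypergeomPMF, if_pos (by omega), if_pos hj, Nat.add_sub_add_right,
      Nat.add_sub_add_right]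
    have h₁ : ((a : ℝ) + 1) * a.choose j = (a + 1).choose (j + 1) * ((j : ℝ) + 1) := by
      exact_mod_cast Nat.add_one_mul_choose_eq a j
    have h₂ : ((n : ℝ) + 1) * n.choose b = (n + 1).choose (b + 1) * ((b : ℝ) + 1) := by
      exact_mod_cast Nat.add_one_mul_choose_eq n b
    have hC : (n.choose b : ℝ) ≠ 0 := by exact_mod_cast (Nat.choose_pos (by omega)).ne'
    have hC' : ((n + 1).choose (b + 1) : ℝ) ≠ 0 := by
      exact_mod_cast (Nat.choose_pos (by omega)).ne'
    push_cast
    field_simp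
    linear_combination (-((n - a).choose (b - j) : ℝ) * ((n : ℝ) + 1) * n.choose b) * h₁
      + (((n - a).choose (b - j) : ℝ) * ((a : ℝ) + 1) * a.choose j) * h₂
  · rw [hypergeomPMF_of_lt (by omega), hypergeomPMF_of_lt (by omega), mul_zero, mul_zero]

theorem sum_mul_hypergeomPMF {n a b : ℕ} (ha : a ≤ n) (hb : b ≤ n) :
    ∑ j ∈ range (b + 1), (j : ℝ) * hypergeomPMF n a b j = a * b / n := by
  rcases Nat.eq_zero_or_pos a with rfl | ha₀
  · refine (sum_eq_zero fun j _ => ?_).trans (by simp)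
    rcases Nat.eq_zero_or_pos j with rfl | hj
    · simp
    · rw [hypergeomPMF_of_lt_left hj, mul_zero]
  rcases Nat.eq_zero_or_pos b with rfl | hb₀
  · simp
  have hQ := sum_hypergeomPMF (n := n - 1) (a := a - 1) (b := b - 1) (by omega) (by omega)
  rw [Nat.sub_add_cancel hb₀] at hQ
  rw [sum_range_succ']
  simp only [Nat.cast_zero, zero_mul, add_zero, Nat.cast_succ,
    succ_mul_hypergeomPMF_succ ha₀ hb₀ hb, ← mul_sum, hQ, mul_one]

theorem hypergeomPMF_succ_mul {n a b j : ℕ} (hj : j < b) :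
    hypergeomPMF n a b (j + 1) * (((j + 1) * (n - a - (b - (j + 1))) : ℕ) : ℝ)
      = hypergeomPMF n a b j * (((a - j) * (b - j) : ℕ) : ℝ) := by
  have h₁ := Nat.choose_succ_right_eq a j
  have h₂ := Nat.choose_succ_right_eq (n - a) (b - (j + 1))
  rw [show b - (j + 1) + 1 = b - j by omega] at h₂
  rw [hypergeomPMF, hypergeomPMF, if_pos (Nat.succ_le_of_lt hj), if_pos hj.le, div_mul_eq_mul_div,
    div_mul_eq_mul_div, ← Nat.cast_mul, ← Nat.cast_mul]
  congr 2
  calc a.choose (j + 1) * (n - a).choose (b - (j + 1)) * ((j + 1) * (n - a - (b - (j + 1))))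
      = a.choose (j + 1) * (j + 1) * ((n - a).choose (b - (j + 1)) * (n - a - (b - (j + 1)))) := by
        ring
    _ = a.choose j * (n - a).choose (b - j) * ((a - j) * (b - j)) := by rw [h₁, ← h₂]; ring

theorem hypergeomPMF_crossing {n a b : ℕ} (ha : 0 < a) (hab : a + b ≤ n) {j : ℕ}
    (h : hypergeomPMF (n - 1) (a - 1) (b - 1) j ≤ hypergeomPMF n a b j) :
    hypergeomPMF (n - 1) (a - 1) (b - 1) (j + 1) ≤ hypergeomPMF n a b (j + 1) := by
  by_cases hjb : b - 1 < j + 1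
  · rw [hypergeomPMF_of_lt hjb]; exact hypergeomPMF_nonneg _ _ _ _
  by_cases hja : a - 1 < j + 1
  · rw [hypergeomPMF_of_lt_left hja]; exact hypergeomPMF_nonneg _ _ _ _
  have hP := hypergeomPMF_succ_mul (n := n) (a := a) (b := b) (j := j) (by omega)
  have hQ := hypergeomPMF_succ_mul (n := n - 1) (a := a - 1) (b := b - 1) (j := j) (by omega)
  have hα : (((j + 1) * (n - a - (b - (j + 1))) : ℕ) : ℝ)
      ≤ (((j + 1) * (n - 1 - (a - 1) - (b - 1 - (j + 1))) : ℕ) : ℝ) := by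
    exact_mod_cast Nat.mul_le_mul_left _ (by omega)
  have hβ : (((a - 1 - j) * (b - 1 - j) : ℕ) : ℝ) ≤ (((a - j) * (b - j) : ℕ) : ℝ) := by
    exact_mod_cast Nat.mul_le_mul (by omega) (by omega)
  have hα₀ : (0 : ℝ) < (((j + 1) * (n - a - (b - (j + 1))) : ℕ) : ℝ) := by
    exact_mod_cast Nat.mul_pos (by omega) (by omega)
  -- monotone likelihood ratio: by `hP` and `hQ`, the reduced law has the smaller successive ratios
  refine le_of_mul_le_mul_right ?_ (hα₀.trans_le hα)
  calc _ = _ := hQ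
    _ ≤ _ := mul_le_mul h hβ (Nat.cast_nonneg _) (hypergeomPMF_nonneg _ _ _ _)
    _ = _ := hP.symm
    _ ≤ _ := mul_le_mul_of_nonneg_left hα (hypergeomPMF_nonneg _ _ _ _)

theorem sum_sub_poissonProb_le_of_sizeBias {r : ℝ} (hr : 0 < r) {P Q : ℕ → ℝ} {N : ℕ}
    (hbias : ∀ k : ℕ, ((k : ℝ) + 1) * P (k + 1) = r * Q k)
    (hP : ∑ j ∈ range (N + 1), P j = 1) (hQ : ∑ j ∈ range N, Q j = 1) (hQN : Q N = 0)
    (hcross : ∀ j, Q j ≤ P j → Q (j + 1) ≤ P (j + 1)) {A : Finset ℕ} (hA : A ⊆ range (N + 1)) :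
    ∑ j ∈ A, (P j - poissonProb r j) ≤ (1 - exp (-r)) * (r - ∑ j ∈ range N, (j : ℝ) * Q j) := by
  set h : ℕ → ℝ := fun i => (if i ∈ A then 1 else 0) - ∑ j ∈ A, poissonProb r j
  set g := poissonSteinSol r h
  have hPQ : ∑ j ∈ range (N + 1), P j = ∑ j ∈ range (N + 1), Q j := by
    rw [hP, sum_range_succ, hQN, add_zero, hQ]
  have hmeanP : ∑ j ∈ range (N + 1), (j : ℝ) * P j = r := by
    rw [sum_range_succ']
    simp only [Nat.cast_zero, zero_mul, add_zero, Nat.cast_succ, hbias, ← mul_sum, hQ, mul_one]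
  have htest : ∑ j ∈ A, (P j - poissonProb r j) = ∑ j ∈ range (N + 1), P j * h j := by
    simp only [h, mul_sub, mul_ite, mul_one, mul_zero, sum_sub_distrib, ← sum_mul, hP, one_mul,
      sum_ite_mem, inter_eq_right.2 hA]
  have hstein : ∑ j ∈ range (N + 1), P j * h j = r * ∑ j ∈ range (N + 1), g j * (P j - Q j) := by
    calc ∑ j ∈ range (N + 1), P j * h j
        = ∑ j ∈ range (N + 1), P j * poissonSteinOp r g j := by
          simp only [g, poissonSteinOp_poissonSteinSol hr.ne']
      _ = r * (∑ j ∈ range (N + 1), P j * g j - ∑ j ∈ range N, Q j * g j) :=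
          sum_mul_poissonSteinOp_of_sizeBias hbias g N
      _ = r * ∑ j ∈ range (N + 1), g j * (P j - Q j) := by
          have hQg : ∑ j ∈ range N, Q j * g j = ∑ j ∈ range (N + 1), Q j * g j := by
            rw [sum_range_succ, hQN, zero_mul, add_zero]
          rw [hQg, ← sum_sub_distrib]
          exact congrArg _ (sum_congr rfl fun j _ => by ring)
  have hgap : ∑ j ∈ range (N + 1), (j : ℝ) * (P j - Q j) = r - ∑ j ∈ range N, (j : ℝ) * Q j := by
    simp only [mul_sub, sum_sub_distrib, hmeanP, sum_range_succ (fun j => (j : ℝ) * Q j) N, hQN,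
      mul_zero, add_zero]
  have hparts := sum_mul_sub_le_of_sum_range_le hPQ
    (fun t ht => sum_range_le_of_crossing hPQ hcross ht)
    (poissonSteinSol_indicator_succ_sub_le hr A)
  calc ∑ j ∈ A, (P j - poissonProb r j)
      = r * ∑ j ∈ range (N + 1), g j * (P j - Q j) := htest.trans hstein
    _ ≤ r * ((1 - exp (-r)) / r * ∑ j ∈ range (N + 1), (j : ℝ) * (P j - Q j)) := by gcongr
    _ = (1 - exp (-r)) * (r - ∑ j ∈ range N, (j : ℝ) * Q j) := by
      rw [hgap, ← mul_assoc, mul_div_cancel₀ _ hr.ne']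

theorem half_tsum_abs_sub_poissonProb_le_of_sizeBias {r : ℝ} (hr : 0 < r) {P Q : ℕ → ℝ} {N : ℕ}
    (hbias : ∀ k : ℕ, ((k : ℝ) + 1) * P (k + 1) = r * Q k)
    (hP : ∑ j ∈ range (N + 1), P j = 1) (hQ : ∑ j ∈ range N, Q j = 1) (hQN : Q N = 0)
    (hcross : ∀ j, Q j ≤ P j → Q (j + 1) ≤ P (j + 1)) (hPN : ∀ j, N < j → P j = 0) :
    1 / 2 * ∑' j, |P j - poissonProb r j|
      ≤ (1 - exp (-r)) * (r - ∑ j ∈ range N, (j : ℝ) * Q j) := by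
  have hsupp : ∀ j ∉ range (N + 1), P j = 0 := fun j hj => hPN j (by simpa using hj)
  have hπ : ∀ j, 0 ≤ poissonProb r j := fun j => by unfold poissonProb; positivity
  have hdiff := (hP ▸ hasSum_sum_of_ne_finset_zero hsupp).sub (hasSum_poissonProb r)
  have hpos : ∑' j, max (P j - poissonProb r j) 0
      = ∑ j ∈ (range (N + 1)).filter (fun j => poissonProb r j ≤ P j), (P j - poissonProb r j) := by
    rw [tsum_eq_sum fun j hj => by rw [hsupp j hj, zero_sub, max_eq_right (neg_nonpos.2 (hπ j))],
      sum_filter]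
    refine sum_congr rfl fun j _ => ?_
    split_ifs with h
    · exact max_eq_left (sub_nonneg.2 h)
    · exact max_eq_right (sub_nonpos.2 (not_le.1 h).le)
  rw [tsum_abs_eq_two_mul_tsum_max hdiff.summable (by rw [hdiff.tsum_eq, sub_self]), hpos,
    one_div, inv_mul_cancel_left₀ two_ne_zero]
  exact sum_sub_poissonProb_le_of_sizeBias hr hbias hP hQ hQN hcross (filter_subset _ _)

theorem half_tsum_abs_sub_poissonProb_hypergeomPMF_le {n a b : ℕ} (ha : 0 < a) (hb : 0 < b)
    (hab : a + b ≤ n) :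
    1 / 2 * ∑' j, |hypergeomPMF n a b j - poissonProb (a * b / n) j|
      ≤ (1 - exp (-(a * b / n))) * (a * b / n - (a - 1) * (b - 1) / (n - 1)) := by
  have hQ := sum_hypergeomPMF (n := n - 1) (a := a - 1) (b := b - 1) (by omega) (by omega)
  have hQmean := sum_mul_hypergeomPMF (n := n - 1) (a := a - 1) (b := b - 1) (by omega) (by omega)
  rw [Nat.sub_add_cancel hb] at hQ hQmean
  rw [Nat.cast_sub ha, Nat.cast_sub hb, Nat.cast_sub (by omega : 1 ≤ n), Nat.cast_one] at hQmean
  have hr : (0 : ℝ) < a * b / n := by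
    have : 0 < n := by omega
    positivity
  rw [← hQmean]
  exact half_tsum_abs_sub_poissonProb_le_of_sizeBias hr
    (succ_mul_hypergeomPMF_succ ha hb (by omega)) (sum_hypergeomPMF (by omega) (by omega)) hQ
    (hypergeomPMF_of_lt (by omega)) (fun _ => hypergeomPMF_crossing ha hab)
    (fun _ => hypergeomPMF_of_lt)

theorem mul_div_sub_mul_div_sub_one_mem_Icc {a b n : ℝ} (ha : 1 ≤ a) (hb : 1 ≤ b)
    (hab : a + b ≤ n) : a * b / n - (a - 1) * (b - 1) / (n - 1) ∈ Set.Icc 0 ((a + b) / n) := by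
  have hn : 0 < n * (n - 1) := by nlinarith
  have hgap :
      a * b / n - (a - 1) * (b - 1) / (n - 1) = (n * (a + b - 1) - a * b) / (n * (n - 1)) := by
    have : n - 1 ≠ 0 := by linarith
    have : n ≠ 0 := by linarith
    field_simp
    ring
  rw [hgap]
  refine ⟨div_nonneg (by nlinarith) hn.le, ?_⟩
  rw [div_le_div_iff₀ hn (by linarith)]
  nlinarith [mul_nonneg (by linarith : (0 : ℝ) ≤ n) (by nlinarith : (0 : ℝ) ≤ n + a * b - a - b)]

end

/-- Stein–Chen Poisson approximation of the hypergeometric distribution of the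
intersection size of two independent uniform random subsets of `{1,…,n}` of
sizes `m₁` and `m₂`, with Poisson mean `e = m₁m₂/n`. -/
theorem stmt17 (n m₁ m₂ : ℕ) (hm₁ : 0 < m₁) (hm₂ : 0 < m₂) (hsum : m₁ + m₂ ≤ n) :
    let e : ℝ := (m₁ * m₂ : ℝ) / n
    let hyp : ℕ → ℝ := fun j => if j ≤ m₂ then
      ((m₁.choose j * (n - m₁).choose (m₂ - j) : ℕ) : ℝ) / ((n.choose m₂ : ℕ) : ℝ) else 0
    let pois : ℕ → ℝ := fun j => Real.exp (-e) * e ^ j / (j.factorial : ℝ)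
    (1 / 2) * (∑' j : ℕ, |hyp j - pois j|)
        ≤ (1 - Real.exp (-e)) * ((n : ℝ) / ((n : ℝ) - 1))
            * ((m₁ : ℝ) / n + (m₂ : ℝ) / n - (m₁ * m₂ : ℝ) / (n : ℝ)^2 - 1 / n) ∧
    (1 - Real.exp (-e)) * ((n : ℝ) / ((n : ℝ) - 1))
        * ((m₁ : ℝ) / n + (m₂ : ℝ) / n - (m₁ * m₂ : ℝ) / (n : ℝ)^2 - 1 / n)
      ≤ ((m₁ : ℝ) + (m₂ : ℝ)) / n := by
  intro e hyp pois
  have hn : (1 : ℝ) < n := by exact_mod_cast (by omega : 1 < n)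
  have hTV := half_tsum_abs_sub_poissonProb_hypergeomPMF_le hm₁ hm₂ hsum
  have hgap : e - (m₁ - 1) * (m₂ - 1) / (n - 1)
      = n / (n - 1) * ((m₁ : ℝ) / n + (m₂ : ℝ) / n - (m₁ * m₂ : ℝ) / (n : ℝ) ^ 2 - 1 / n) := by
    have : (n : ℝ) - 1 ≠ 0 := by linarith
    simp only [e]
    field_simp
    ring
  obtain ⟨hgap₀, hgap_le⟩ := mul_div_sub_mul_div_sub_one_mem_Icc
    (by exact_mod_cast hm₁ : (1 : ℝ) ≤ m₁) (by exact_mod_cast hm₂ : (1 : ℝ) ≤ m₂)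
    (by exact_mod_cast hsum : (m₁ : ℝ) + m₂ ≤ n)
  rw [hgap, ← mul_assoc] at hTV
  refine ⟨hTV, ?_⟩
  rw [mul_assoc, ← hgap]
  calc _ ≤ 1 * (e - (m₁ - 1) * (m₂ - 1) / (n - 1)) :=
        mul_le_mul_of_nonneg_right (by linarith [exp_pos (-e)]) hgap₀
    _ ≤ _ := by rwa [one_mul]
end
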